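/- A non-constant real-analytic function ψ on the 2-sphere S² that is invariant under the U(1)-action by rotations around the axis through points p and −p has a strict local extremum at p or is locally constant near p; in fact if ψ is non-constant on every neighborhood of p, it has a strict local extremum at p. -/

import Mathlib

/-!
A determinant-one isometry fixing `p` carries a point of the unit sphere to any other point with
the same inner product with `p`: compose the reflection swapping the two points (it fixes `p`)
with a reflection fixing both `p` and the target. Hence on the sphere
`ψ x = f (arccos ⟪p, x⟫)`, where `f t = ψ (cos t • p + sin t • v)` is `ψ` along a meridian
through `p`. As `f` is real-analytic, by the isolated zeros principle `f - f 0` either vanishes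
near `0`, which makes `ψ` constant near `p` on the sphere, or has no zero on some `(0, ε)`; there
it has constant sign by the intermediate value theorem, and that sign decides between a strict
maximum and a strict minimum at `p`.
-/

open Module Submodule Filter Topology Set Real

local notation "⟪" x ", " y "⟫" => inner ℝ x y

section FiniteDimensional

variable {E : Type*} [NormedAddCommGroup E] [InnerProductSpace ℝ E] [FiniteDimensional ℝ E]

theorem exists_ne_zero_forall_inner_eq_zero {ι : Type*} [Fintype ι] (v : ι → E)
    (hv : Fintype.card ι < finrank ℝ E) : ∃ w ≠ 0, ∀ i, ⟪v i, w⟫ = 0 := by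
  have hK : span ℝ (range v) ≠ ⊤ := fun h ↦ by
    have := finrank_range_le_card (R := ℝ) v
    rw [Set.finrank, h, finrank_top] at this
    omega
  obtain ⟨w, hw, hw0⟩ := exists_mem_ne_zero_of_ne_bot (mt orthogonal_eq_bot_iff.mp hK)
  exact ⟨w, hw0, fun i ↦ inner_right_of_mem_orthogonal (subset_span (mem_range_self i)) hw⟩

theorem exists_norm_eq_one_inner_eq_zero (hE : 1 < finrank ℝ E) (p : E) :
    ∃ v : E, ‖v‖ = 1 ∧ ⟪p, v⟫ = 0 := by
  obtain ⟨w, hw0, hw⟩ := exists_ne_zero_forall_inner_eq_zero ![p] (by simpa using hE)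
  refine ⟨(‖w‖⁻¹ : ℝ) • w, norm_smul_inv_norm hw0, ?_⟩
  rw [real_inner_smul_right, show ⟪p, w⟫ = 0 from hw 0, mul_zero]

theorem det_reflection_orthogonal_span_singleton {w : E} (hw : w ≠ 0) :
    LinearMap.det ((ℝ ∙ w)ᗮ.reflection.toLinearEquiv : E →ₗ[ℝ] E) = -1 := by
  rw [det_reflection, orthogonal_orthogonal, finrank_span_singleton hw, pow_one]

theorem exists_linearIsometryEquiv_det_eq_one_fix_apply_eq (hE : 2 < finrank ℝ E) {p x y : E}
    (hxy : ‖x‖ = ‖y‖) (hpxy : ⟪p, x⟫ = ⟪p, y⟫) :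
    ∃ R : E ≃ₗᵢ[ℝ] E, LinearMap.det (R.toLinearEquiv : E →ₗ[ℝ] E) = 1 ∧ R p = p ∧ R x = y := by
  rcases eq_or_ne x y with rfl | hne
  · exact ⟨.refl ℝ E, LinearMap.det_id, rfl, rfl⟩
  obtain ⟨w, hw0, hw⟩ := exists_ne_zero_forall_inner_eq_zero ![p, y] (by simpa using hE)
  set R₁ := (ℝ ∙ (x - y))ᗮ.reflection
  set R₂ := (ℝ ∙ w)ᗮ.reflection
  have hR₁p : R₁ p = p := reflection_mem_subspace_eq_self <|
    mem_orthogonal_singleton_iff_inner_right.mpr <| by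
      rw [inner_sub_left, real_inner_comm, hpxy, real_inner_comm, sub_self]
  have hR₂ : ∀ i, R₂ (![p, y] i) = ![p, y] i := fun i ↦ reflection_mem_subspace_eq_self <|
    mem_orthogonal_singleton_iff_inner_right.mpr <| by rw [real_inner_comm]; exact hw i
  refine ⟨R₁.trans R₂, ?_, ?_, ?_⟩
  · change LinearMap.det (R₂.toLinearEquiv.toLinearMap ∘ₗ R₁.toLinearEquiv.toLinearMap) = 1
    rw [LinearMap.det_comp, det_reflection_orthogonal_span_singleton hw0,
      det_reflection_orthogonal_span_singleton (sub_ne_zero.mpr hne)]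
    norm_num
  · simpa [hR₁p] using hR₂ 0
  · simpa [R₁, reflection_sub hxy] using hR₂ 1

end FiniteDimensional

section UnitSphere

variable {E : Type*} [NormedAddCommGroup E] [InnerProductSpace ℝ E]

theorem inner_cos_smul_add_sin_smul {p v : E} (hp : ‖p‖ = 1) (hpv : ⟪p, v⟫ = 0) (t : ℝ) :
    ⟪p, cos t • p + sin t • v⟫ = cos t := by
  rw [inner_add_right, real_inner_smul_right, real_inner_smul_right, hpv,
    real_inner_self_eq_norm_sq, hp]
  ring

theorem norm_cos_smul_add_sin_smul {p v : E} (hp : ‖p‖ = 1) (hv : ‖v‖ = 1) (hpv : ⟪p, v⟫ = 0)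
    (t : ℝ) : ‖cos t • p + sin t • v‖ = 1 := by
  have horth : ⟪cos t • p, sin t • v⟫ = 0 := by
    rw [real_inner_smul_left, real_inner_smul_right, hpv, mul_zero, mul_zero]
  rw [norm_add_eq_sqrt_iff_real_inner_eq_zero.mpr horth, norm_smul, norm_smul, hp, hv, mul_one,
    mul_one, Real.norm_eq_abs, Real.norm_eq_abs, abs_mul_abs_self, abs_mul_abs_self, ← sq, ← sq,
    cos_sq_add_sin_sq, sqrt_one]

theorem tendsto_arccos_inner_nhdsGT {p : E} (hp : ‖p‖ = 1) :
    Tendsto (fun x ↦ arccos ⟪p, x⟫) (𝓝[{x | ‖x‖ = 1} \ {p}] p) (𝓝[>] 0) := by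
  refine tendsto_nhdsWithin_iff.mpr ⟨?_, eventually_nhdsWithin_of_forall ?_⟩
  · have hcont : Continuous fun x : E ↦ arccos ⟪p, x⟫ := by fun_prop
    simpa [hp] using hcont.continuousWithinAt.tendsto (x := p)
  · rintro x ⟨hx, hxp⟩
    exact arccos_pos.mpr ((inner_lt_one_iff_real_of_norm_eq_one hp hx).mpr (Ne.symm hxp))

end UnitSphere

theorem IsPreconnected.forall_lt_or_forall_gt {α β : Type*} [TopologicalSpace α] [LinearOrder β]
    [TopologicalSpace β] [OrderClosedTopology β] {s : Set α} (hs : IsPreconnected s) {f : α → β}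
    (hf : ContinuousOn f s) {c : β} (hc : ∀ x ∈ s, f x ≠ c) :
    (∀ x ∈ s, f x < c) ∨ (∀ x ∈ s, c < f x) := by
  by_contra! h
  obtain ⟨⟨a, ha, hca⟩, ⟨b, hb, hbc⟩⟩ := h
  obtain ⟨x, hx, hxc⟩ := hs.intermediate_value hb ha hf ⟨hbc, hca⟩
  exact hc x hx hxc

theorem AnalyticAt.eventually_nhdsGT_lt_or_gt {f : ℝ → ℝ} {a : ℝ} (hf : AnalyticAt ℝ f a)
    (hnc : ¬ ∀ᶠ t in 𝓝 a, f t = f a) :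
    (∀ᶠ t in 𝓝[>] a, f t < f a) ∨ (∀ᶠ t in 𝓝[>] a, f a < f t) := by
  have hne : ∀ᶠ t in 𝓝[≠] a, f t ≠ f a := by
    rcases (hf.sub analyticAt_const).eventually_eq_zero_or_eventually_ne_zero with h | h
    · exact absurd (h.mono fun t ht ↦ sub_eq_zero.mp ht) hnc
    · exact h.mono fun t ht ↦ sub_ne_zero.mp ht
  have hgood : ∀ᶠ t in 𝓝[>] a, f t ≠ f a ∧ ContinuousAt f t :=
    (hne.filter_mono (nhdsWithin_mono a fun t ht ↦ ne_of_gt ht)).and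
      (nhdsWithin_le_nhds (hf.eventually_analyticAt.mono fun t ht ↦ ht.continuousAt))
  obtain ⟨u, hau, hu⟩ := mem_nhdsGT_iff_exists_Ioo_subset.mp hgood
  refine (isPreconnected_Ioo.forall_lt_or_forall_gt
    (fun t ht ↦ (hu ht).2.continuousWithinAt) (fun t ht ↦ (hu ht).1)).imp ?_ ?_ <;>
  exact mem_of_superset (Ioo_mem_nhdsGT hau)

/-- Let `ψ` be a real-analytic function on a neighborhood of the unit sphere
`S² ⊂ ℝ³`, invariant (on the sphere) under all rotations fixing `p` — i.e. under
every linear isometry of `ℝ³` of determinant `1` fixing `p`, which is exactly the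
`U(1)` of rotations around the axis through `p` and `-p`. If `ψ` restricted to
the sphere is non-constant on every neighborhood of `p`, then `ψ|_{S²}` has a
strict local extremum at `p`. -/
theorem strict_extremum_of_rotation_invariant_analytic
    (ψ : EuclideanSpace ℝ (Fin 3) → ℝ)
    (hψ : AnalyticOnNhd ℝ ψ Set.univ)
    (p : EuclideanSpace ℝ (Fin 3)) (hp : ‖p‖ = 1)
    (hrot : ∀ R : EuclideanSpace ℝ (Fin 3) ≃ₗᵢ[ℝ] EuclideanSpace ℝ (Fin 3),
      R p = p → LinearMap.det (R.toLinearEquiv : EuclideanSpace ℝ (Fin 3) →ₗ[ℝ]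
        EuclideanSpace ℝ (Fin 3)) = 1 →
      ∀ x : EuclideanSpace ℝ (Fin 3), ‖x‖ = 1 → ψ (R x) = ψ x)
    (hnc : ∀ t ∈ nhds p, ∃ x ∈ t, ‖x‖ = 1 ∧ ψ x ≠ ψ p) :
    (∃ t ∈ nhds p, ∀ x ∈ t, ‖x‖ = 1 → x ≠ p → ψ x < ψ p) ∨
    (∃ t ∈ nhds p, ∀ x ∈ t, ‖x‖ = 1 → x ≠ p → ψ p < ψ x) := by
  have hdim : finrank ℝ (EuclideanSpace ℝ (Fin 3)) = 3 := finrank_euclideanSpace_fin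
  obtain ⟨v, hv, hpv⟩ := exists_norm_eq_one_inner_eq_zero (by omega) p
  set f : ℝ → ℝ := fun t ↦ ψ (cos t • p + sin t • v)
  have hf : AnalyticAt ℝ f 0 := (hψ _ (mem_univ _)).comp <|
    (analyticAt_cos.smul analyticAt_const).add (analyticAt_sin.smul analyticAt_const)
  have hf0 : f 0 = ψ p := by simp [f]
  have hψf : ∀ x, ‖x‖ = 1 → ψ x = f (arccos ⟪p, x⟫) := fun x hx ↦ by
    obtain ⟨R, hdet, hRp, hRx⟩ := exists_linearIsometryEquiv_det_eq_one_fix_apply_eq (by omega)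
      (hx.trans (norm_cos_smul_add_sin_smul hp hv hpv _).symm)
      (by rw [inner_cos_smul_add_sin_smul hp hpv, cos_arccos
        (neg_one_le_real_inner_of_norm_eq_one hp hx) (real_inner_le_one_of_norm_eq_one hp hx)])
    rw [← hrot R hRp hdet x hx, hRx]
  have hf_nonconst : ¬ ∀ᶠ t in 𝓝 0, f t = f 0 := fun h ↦ by
    have hcont : Continuous fun x : EuclideanSpace ℝ (Fin 3) ↦ arccos ⟪p, x⟫ := by fun_prop
    have := hcont.tendsto p
    rw [inner_self_eq_one_of_norm_eq_one hp, arccos_one] at this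
    obtain ⟨x, hx, hx1, hne⟩ := hnc _ (this.eventually h)
    exact hne (by rw [hψf x hx1, hx, hf0])
  have hsphere : ∀ {Q : ℝ → ℝ → Prop}, (∀ᶠ t in 𝓝[>] 0, Q (f t) (f 0)) →
      ∃ s ∈ 𝓝 p, ∀ x ∈ s, ‖x‖ = 1 → x ≠ p → Q (ψ x) (ψ p) := fun hQ ↦ by
    obtain ⟨s, hs, hsQ⟩ :=
      (eventually_nhdsWithin_iff.mp ((tendsto_arccos_inner_nhdsGT hp).eventually hQ)).exists_mem
    exact ⟨s, hs, fun x hx hx1 hxp ↦ by rw [hψf x hx1, ← hf0]; exact hsQ x hx ⟨hx1, hxp⟩⟩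
  exact (hf.eventually_nhdsGT_lt_or_gt hf_nonconst).imp
    (hsphere (Q := (· < ·))) (hsphere (Q := (· > ·)))
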